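/- The iterates (φ̂^{n+1/2}, ψ̂ⁿ)_{n≥0} of the discrete scheme converge entrywise, as n → ∞, towards a pair (φ̂, ψ̂) ∈ M_ε × M_0 (with ε := exp(−(‖u_T‖_∞ + ‖f‖_∞ T)/σ²)) satisfying the coupled discrete system: for 0 ≤ i ≤ I−1, 0 ≤ j ≤ J, (φ̂_{i+1,j} − φ̂_{i,j})/Δt + (σ²/2)(φ̂_{i,j+1} − 2φ̂_{i,j} + φ̂_{i,j-1})/(Δx)² = −(1/σ²) f(x_j, φ̂_{i,j} ψ̂_{i,j}) φ̂_{i,j} with φ̂_{I,j} = exp(u_T(x_j)/σ²), and (ψ̂_{i+1,j} − ψ̂_{i,j})/Δt − (σ²/2)(ψ̂_{i+1,j+1} − 2ψ̂_{i+1,j} + ψ̂_{i+1,j-1})/(Δx)² = (1/σ²) f(x_j, φ̂_{i+1,j} ψ̂_{i+1,j}) ψ̂_{i+1,j} with ψ̂_{0,j} = m_0(x_j)/φ̂_{0,j}. -/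

import Mathlib

noncomputable section

open Real Filter

/-- Sup of `|g|` over `[0,1]` (the sup norm `‖g‖_∞`). -/
def supIcc (g : ℝ → ℝ) : ℝ := ⨆ x : Set.Icc (0:ℝ) 1, |g (x : ℝ)|

/-- Sup of `|f|` over `[0,1] × ℝ` (the sup norm `‖f‖_∞`). -/
def supF (f : ℝ → ℝ → ℝ) : ℝ := ⨆ p : Set.Icc (0:ℝ) 1 × ℝ, |f (p.1 : ℝ) p.2|

/-- Membership in `M_ε`: all grid entries (for `i ≤ I`, `j ≤ J`) are at least `ε`. -/
def MemM (I J : ℕ) (ε : ℝ) (m : ℕ → ℕ → ℝ) : Prop :=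
  ∀ i ≤ I, ∀ j ≤ J, ε ≤ m i j

/-- The discrete backward scheme `(Ê_φ)` with data `ψ`.  Here `Δt = T/I`, `Δx = 1/J`,
`x_j = j/J`, and the Neumann conventions `m_{i,-1} = m_{i,0}`, `m_{i,J+1} = m_{i,J}`
are realized by the clamped indices `j - 1` (truncated `ℕ`-subtraction) and `min (j+1) J`. -/
def BScheme (T σ : ℝ) (I J : ℕ) (f : ℝ → ℝ → ℝ) (uT : ℝ → ℝ)
    (ψ φ : ℕ → ℕ → ℝ) : Prop :=
  (∀ i < I, ∀ j ≤ J,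
      (φ (i+1) j - φ i j) / (T / (I:ℝ))
        + σ^2 / 2 * ((φ i (min (j+1) J) - 2 * φ i j + φ i (j-1)) / (1/(J:ℝ))^2)
      = -(1/σ^2) * f ((j:ℝ)/(J:ℝ)) (φ i j * ψ i j) * φ i j)
  ∧ ∀ j ≤ J, φ I j = Real.exp (uT ((j:ℝ)/(J:ℝ)) / σ^2)

/-- The discrete forward scheme `(Ê_ψ)` with data `φ` (same conventions as `BScheme`). -/
def FScheme (T σ : ℝ) (I J : ℕ) (f : ℝ → ℝ → ℝ) (m0 : ℝ → ℝ)
    (φ ψ : ℕ → ℕ → ℝ) : Prop :=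
  (∀ i < I, ∀ j ≤ J,
      (ψ (i+1) j - ψ i j) / (T / (I:ℝ))
        - σ^2 / 2 * ((ψ (i+1) (min (j+1) J) - 2 * ψ (i+1) j + ψ (i+1) (j-1)) / (1/(J:ℝ))^2)
      = (1/σ^2) * f ((j:ℝ)/(J:ℝ)) (φ (i+1) j * ψ (i+1) j) * ψ (i+1) j)
  ∧ ∀ j ≤ J, ψ 0 j = m0 ((j:ℝ)/(J:ℝ)) / φ 0 j

/-- Squared grid norm `‖m‖² = max_{0 ≤ i ≤ I} (1/(J+1)) Σ_{j=0}^{J} m_{i,j}²`. -/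
def gnormSq (I J : ℕ) (m : ℕ → ℕ → ℝ) : ℝ :=
  (Finset.range (I+1)).sup' (Finset.nonempty_range_iff.mpr (Nat.succ_ne_zero I))
    (fun i => (1/((J:ℝ)+1)) * ∑ j ∈ Finset.range (J+1), (m i j)^2)

/-- Grid norm `‖m‖`. -/
def gnorm (I J : ℕ) (m : ℕ → ℕ → ℝ) : ℝ := Real.sqrt (gnormSq I J m)

/-!
Solved for the row that is already known, every time step of both schemes has the form
`u = v + d(v w) v - r Δv` with `r = Δt σ²/(2Δx²) ≥ 0` and `d = -(Δt/σ²) f ≥ 0` nondecreasing in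
`ξ`. At an extremal index of a row the clamped Laplacian has a sign, and this discrete maximum
principle yields the a priori bounds `φ̂ ≥ ε`, `0 ≤ ψ̂ ≤ C` as well as comparison principles:
`Φ̂` and `Ψ̂` are both order-reversing. Starting from `ψ̂⁰ = 0 ≤ ψ̂¹`, the iterates `ψ̂ⁿ` therefore
increase and the `φ̂^{n+1/2}` decrease; being bounded they converge entrywise, and by continuity
of `f` the limits solve both schemes.
-/

def clampedLap (J : ℕ) (v : ℕ → ℝ) (j : ℕ) : ℝ := v (min (j + 1) J) - 2 * v j + v (j - 1)

def implicitStep (J : ℕ) (r : ℝ) (d : ℕ → ℝ → ℝ) (v w : ℕ → ℝ) (j : ℕ) : ℝ :=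
  v j + d j (v j * w j) * v j - r * clampedLap J v j

theorem exists_max_clampedLap_nonpos (J : ℕ) (v : ℕ → ℝ) :
    ∃ js ≤ J, (∀ k ≤ J, v k ≤ v js) ∧ clampedLap J v js ≤ 0 := by
  obtain ⟨js, hjs, hmax⟩ := (Finset.Iic J).exists_max_image v ⟨0, Finset.mem_Iic.2 J.zero_le⟩
  rw [Finset.mem_Iic] at hjs
  have hmax' : ∀ k ≤ J, v k ≤ v js := fun k hk => hmax k (Finset.mem_Iic.2 hk)
  have hright := hmax' (min (js + 1) J) (min_le_right _ _)
  have hleft := hmax' (js - 1) (js.sub_le 1 |>.trans hjs)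
  exact ⟨js, hjs, hmax', by unfold clampedLap; linarith⟩

theorem exists_min_clampedLap_nonneg (J : ℕ) (v : ℕ → ℝ) :
    ∃ js ≤ J, (∀ k ≤ J, v js ≤ v k) ∧ 0 ≤ clampedLap J v js := by
  obtain ⟨js, hjs, hmax, hlap⟩ := exists_max_clampedLap_nonpos J (-v)
  refine ⟨js, hjs, fun k hk => neg_le_neg_iff.1 (hmax k hk), ?_⟩
  unfold clampedLap at hlap ⊢
  simp only [Pi.neg_apply] at hlap
  linarith

section implicitStep

variable {J : ℕ} {r : ℝ} {d : ℕ → ℝ → ℝ}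

theorem implicitStep_comparison (hr : 0 ≤ r) (hd : ∀ j ≤ J, ∀ ξ, 0 ≤ d j ξ)
    (hdm : ∀ j ≤ J, Monotone (d j)) {v v' w w' : ℕ → ℝ} (hv' : ∀ j ≤ J, 0 ≤ v' j)
    (hw' : ∀ j ≤ J, 0 ≤ w' j) (hw : ∀ j ≤ J, w' j ≤ w j)
    (hstep : ∀ j ≤ J, implicitStep J r d v w j ≤ implicitStep J r d v' w' j) :
    ∀ j ≤ J, v j ≤ v' j := by
  obtain ⟨js, hjs, hmax, hlap⟩ := exists_max_clampedLap_nonpos J fun j => v j - v' j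
  suffices h : v js - v' js ≤ 0 from fun j hj => by linarith [hmax j hj]
  by_contra! hpos
  have hprod : v' js * w' js ≤ v js * w js :=
    mul_le_mul (by linarith) (hw js hjs) (hw' js hjs) (by linarith [hv' js hjs])
  have hreact : d js (v' js * w' js) * v' js ≤ d js (v js * w js) * v js :=
    mul_le_mul (hdm js hjs hprod) (by linarith) (hv' js hjs) (hd js hjs _)
  have hdiff := mul_nonpos_of_nonneg_of_nonpos hr hlap
  have := hstep js hjs
  simp only [implicitStep, clampedLap] at this hdiff
  linarith

theorem nonneg_of_nonneg_implicitStep (hr : 0 ≤ r) (hd : ∀ j ≤ J, ∀ ξ, 0 ≤ d j ξ)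
    {v w : ℕ → ℝ} (hstep : ∀ j ≤ J, 0 ≤ implicitStep J r d v w j) : ∀ j ≤ J, 0 ≤ v j := by
  obtain ⟨js, hjs, hmin, hlap⟩ := exists_min_clampedLap_nonneg J v
  suffices h : 0 ≤ v js from fun j hj => h.trans (hmin j hj)
  have := hstep js hjs
  unfold implicitStep at this
  nlinarith [mul_nonneg hr hlap, hd js hjs (v js * w js)]

theorem le_of_le_implicitStep (hr : 0 ≤ r) (hd : ∀ j ≤ J, ∀ ξ, 0 ≤ d j ξ) {K : ℝ}
    (hdK : ∀ j ≤ J, ∀ ξ, d j ξ ≤ K) {a : ℝ} (ha : 0 ≤ a) {v w : ℕ → ℝ}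
    (hstep : ∀ j ≤ J, a ≤ implicitStep J r d v w j) : ∀ j ≤ J, a / (1 + K) ≤ v j := by
  have hv := nonneg_of_nonneg_implicitStep hr hd fun j hj => ha.trans (hstep j hj)
  obtain ⟨js, hjs, hmin, hlap⟩ := exists_min_clampedLap_nonneg J v
  suffices h : a / (1 + K) ≤ v js from fun j hj => h.trans (hmin j hj)
  have hK := (hd 0 J.zero_le 0).trans (hdK 0 J.zero_le 0)
  rw [div_le_iff₀ (by linarith)]
  have := hstep js hjs
  unfold implicitStep at this
  linarith [mul_nonneg hr hlap, mul_le_mul_of_nonneg_right (hdK js hjs (v js * w js)) (hv js hjs)]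

theorem le_of_implicitStep_le (hr : 0 ≤ r) (hd : ∀ j ≤ J, ∀ ξ, 0 ≤ d j ξ) {M : ℝ}
    {v w : ℕ → ℝ} (hv : ∀ j ≤ J, 0 ≤ v j) (hstep : ∀ j ≤ J, implicitStep J r d v w j ≤ M) :
    ∀ j ≤ J, v j ≤ M := by
  obtain ⟨js, hjs, hmax, hlap⟩ := exists_max_clampedLap_nonpos J v
  suffices h : v js ≤ M from fun j hj => (hmax j hj).trans h
  have := hstep js hjs
  unfold implicitStep at this
  linarith [mul_nonpos_of_nonneg_of_nonpos hr hlap,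
    mul_nonneg (hd js hjs (v js * w js)) (hv js hjs)]

end implicitStep

def diffusionRatio (T σ : ℝ) (I J : ℕ) : ℝ := T / I * (σ ^ 2 / 2) * J ^ 2

def reactionCoeff (T σ : ℝ) (I J : ℕ) (f : ℝ → ℝ → ℝ) (j : ℕ) (ξ : ℝ) : ℝ :=
  -(T / I / σ ^ 2) * f (j / J) ξ

theorem natCast_div_mem_Icc {j J : ℕ} (hj : j ≤ J) : (j / J : ℝ) ∈ Set.Icc 0 1 :=
  ⟨by positivity, div_le_one_of_le₀ (by exact_mod_cast hj) J.cast_nonneg⟩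

section coefficients

variable {T σ : ℝ} {I J : ℕ} {f : ℝ → ℝ → ℝ}

theorem diffusionRatio_nonneg (hT : 0 ≤ T) : 0 ≤ diffusionRatio T σ I J := by
  unfold diffusionRatio; positivity

theorem reactionCoeff_nonneg (hT : 0 ≤ T) (hfneg : ∀ x ∈ Set.Icc (0:ℝ) 1, ∀ ξ : ℝ, f x ξ ≤ 0) :
    ∀ j ≤ J, ∀ ξ, 0 ≤ reactionCoeff T σ I J f j ξ := fun j hj ξ =>
  mul_nonneg_of_nonpos_of_nonpos (neg_nonpos.2 (by positivity))
    (hfneg _ (natCast_div_mem_Icc hj) ξ)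

theorem reactionCoeff_monotone (hT : 0 ≤ T) (hfmono : ∀ x ∈ Set.Icc (0:ℝ) 1, Antitone (f x)) :
    ∀ j ≤ J, Monotone (reactionCoeff T σ I J f j) := fun j hj _ _ hab =>
  mul_le_mul_of_nonpos_left (hfmono _ (natCast_div_mem_Icc hj) hab) (neg_nonpos.2 (by positivity))

theorem reactionCoeff_le (hT : 0 ≤ T) {K : ℝ} (hfK : ∀ x ∈ Set.Icc (0:ℝ) 1, ∀ ξ : ℝ, |f x ξ| ≤ K) :
    ∀ j ≤ J, ∀ ξ, reactionCoeff T σ I J f j ξ ≤ T / I / σ ^ 2 * K := fun j hj ξ => by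
  rw [reactionCoeff, neg_mul, ← mul_neg]
  exact mul_le_mul_of_nonneg_left ((neg_le_abs _).trans (hfK _ (natCast_div_mem_Icc hj) ξ))
    (by positivity)

theorem BScheme.eq_implicitStep {uT : ℝ → ℝ} {ψ φ : ℕ → ℕ → ℝ} (hT : T ≠ 0) (hσ : σ ≠ 0)
    (hI : I ≠ 0) (hJ : J ≠ 0) (h : BScheme T σ I J f uT ψ φ) :
    ∀ i < I, ∀ j ≤ J, φ (i + 1) j =
      implicitStep J (diffusionRatio T σ I J) (reactionCoeff T σ I J f) (φ i) (ψ i) j := by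
  intro i hi j hj
  have heq := h.1 i hi j hj
  have hI' : (I : ℝ) ≠ 0 := Nat.cast_ne_zero.2 hI
  have hJ' : (J : ℝ) ≠ 0 := Nat.cast_ne_zero.2 hJ
  simp only [implicitStep, clampedLap, diffusionRatio, reactionCoeff]
  field_simp at heq ⊢
  linear_combination heq

theorem FScheme.eq_implicitStep {m0 : ℝ → ℝ} {φ ψ : ℕ → ℕ → ℝ} (hT : T ≠ 0) (hσ : σ ≠ 0)
    (hI : I ≠ 0) (hJ : J ≠ 0) (h : FScheme T σ I J f m0 φ ψ) :
    ∀ i < I, ∀ j ≤ J, ψ i j =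
      implicitStep J (diffusionRatio T σ I J) (reactionCoeff T σ I J f) (ψ (i + 1)) (φ (i + 1))
        j := by
  intro i hi j hj
  have heq := h.1 i hi j hj
  rw [mul_comm (φ (i + 1) j)] at heq
  have hI' : (I : ℝ) ≠ 0 := Nat.cast_ne_zero.2 hI
  have hJ' : (J : ℝ) ≠ 0 := Nat.cast_ne_zero.2 hJ
  simp only [implicitStep, clampedLap, diffusionRatio, reactionCoeff]
  field_simp at heq ⊢
  linear_combination -heq

end coefficients

theorem abs_le_supIcc {g : ℝ → ℝ} (hg : ∃ B : ℝ, ∀ x ∈ Set.Icc (0:ℝ) 1, |g x| ≤ B) {x : ℝ}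
    (hx : x ∈ Set.Icc (0:ℝ) 1) : |g x| ≤ supIcc g := by
  obtain ⟨B, hB⟩ := hg
  exact le_ciSup (f := fun y : Set.Icc (0:ℝ) 1 => |g y|) ⟨B, by rintro _ ⟨y, rfl⟩; exact hB y y.2⟩
    ⟨x, hx⟩

theorem abs_le_supF {f : ℝ → ℝ → ℝ} (hf : ∃ B : ℝ, ∀ x ∈ Set.Icc (0:ℝ) 1, ∀ ξ : ℝ, |f x ξ| ≤ B)
    {x : ℝ} (hx : x ∈ Set.Icc (0:ℝ) 1) (ξ : ℝ) : |f x ξ| ≤ supF f := by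
  obtain ⟨B, hB⟩ := hf
  exact le_ciSup (f := fun p : Set.Icc (0:ℝ) 1 × ℝ => |f p.1 p.2|)
    ⟨B, by rintro _ ⟨p, rfl⟩; exact hB p.1 p.1.2 p.2⟩ (⟨x, hx⟩, ξ)

theorem one_add_pow_le_exp {x : ℝ} (hx : 0 ≤ x) (k : ℕ) : (1 + x) ^ k ≤ exp (k * x) := by
  rw [exp_nat_mul, add_comm]
  exact pow_le_pow_left₀ (by linarith) (add_one_le_exp x) k

section bounds

variable {T σ : ℝ} {I J : ℕ} {f : ℝ → ℝ → ℝ}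

theorem BScheme.memM_exp {uT : ℝ → ℝ} {ψ φ : ℕ → ℕ → ℝ} (hT : 0 < T) (hσ : σ ≠ 0)
    (hI : 0 < I) (hJ : 0 < J) (hfneg : ∀ x ∈ Set.Icc (0:ℝ) 1, ∀ ξ : ℝ, f x ξ ≤ 0) {K Mu : ℝ}
    (hfK : ∀ x ∈ Set.Icc (0:ℝ) 1, ∀ ξ : ℝ, |f x ξ| ≤ K)
    (huT : ∀ x ∈ Set.Icc (0:ℝ) 1, |uT x| ≤ Mu) (h : BScheme T σ I J f uT ψ φ) :
    MemM I J (exp (-(Mu + K * T) / σ ^ 2)) φ := by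
  set q := T / I / σ ^ 2 * K
  have hq : 0 ≤ q := mul_nonneg (by positivity) ((abs_nonneg _).trans (hfK 0 (by simp) 0))
  -- each backward step loses at most a factor `1 + q`, and `(1 + q) ^ I ≤ exp (K T / σ²)`
  have hlevel : ∀ i ≤ I, ∀ j ≤ J, exp (-Mu / σ ^ 2) / (1 + q) ^ (I - i) ≤ φ i j := by
    intro i hi
    induction hi using Nat.decreasingInduction with
    | self =>
      intro j hj
      rw [Nat.sub_self, pow_zero, div_one, h.2 j hj, exp_le_exp]
      gcongr
      linarith [neg_abs_le (uT (j / J)), huT _ (natCast_div_mem_Icc hj)]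
    | of_succ i hi ih =>
      have := le_of_le_implicitStep (diffusionRatio_nonneg hT.le) (reactionCoeff_nonneg hT.le hfneg)
        (reactionCoeff_le hT.le hfK) (by positivity)
        fun j hj => (ih j hj).trans_eq (h.eq_implicitStep hT.ne' hσ hI.ne' hJ.ne' i hi j hj)
      rwa [div_div, ← pow_succ, show I - (i + 1) + 1 = I - i by omega] at this
  intro i hi j hj
  refine le_trans ?_ (hlevel i hi j hj)
  calc exp (-(Mu + K * T) / σ ^ 2) = exp (-Mu / σ ^ 2) / exp (I * q) := by
        have hIq : (I : ℝ) * q = K * T / σ ^ 2 := by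
          simp only [q]
          field_simp
        rw [← exp_sub, hIq]
        ring_nf
    _ ≤ exp (-Mu / σ ^ 2) / exp ((I - i : ℕ) * q) := by
        gcongr
        exact_mod_cast Nat.sub_le I i
    _ ≤ exp (-Mu / σ ^ 2) / (1 + q) ^ (I - i) := by
        gcongr
        exact one_add_pow_le_exp hq _

theorem FScheme.memM_zero {m0 : ℝ → ℝ} {φ ψ : ℕ → ℕ → ℝ} (hT : 0 < T) (hσ : σ ≠ 0)
    (hI : 0 < I) (hJ : 0 < J) (hfneg : ∀ x ∈ Set.Icc (0:ℝ) 1, ∀ ξ : ℝ, f x ξ ≤ 0)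
    (hm0 : ∀ x ∈ Set.Icc (0:ℝ) 1, 0 ≤ m0 x) (hφ : ∀ j ≤ J, 0 ≤ φ 0 j)
    (h : FScheme T σ I J f m0 φ ψ) : MemM I J 0 ψ := by
  intro i hi
  induction i with
  | zero => exact fun j hj => h.2 j hj ▸ div_nonneg (hm0 _ (natCast_div_mem_Icc hj)) (hφ j hj)
  | succ i ih =>
    exact nonneg_of_nonneg_implicitStep (diffusionRatio_nonneg hT.le)
      (reactionCoeff_nonneg hT.le hfneg)
      fun j hj => (ih (by omega) j hj).trans_eq
        (h.eq_implicitStep hT.ne' hσ hI.ne' hJ.ne' i hi j hj)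

theorem FScheme.le_of_initial_le {m0 : ℝ → ℝ} {φ ψ : ℕ → ℕ → ℝ} (hT : 0 < T) (hσ : σ ≠ 0)
    (hI : 0 < I) (hJ : 0 < J) (hfneg : ∀ x ∈ Set.Icc (0:ℝ) 1, ∀ ξ : ℝ, f x ξ ≤ 0)
    (hψ : MemM I J 0 ψ) {M : ℝ} (hM : ∀ j ≤ J, ψ 0 j ≤ M) (h : FScheme T σ I J f m0 φ ψ) :
    ∀ i ≤ I, ∀ j ≤ J, ψ i j ≤ M := by
  intro i hi
  induction i with
  | zero => exact hM
  | succ i ih =>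
    exact le_of_implicitStep_le (diffusionRatio_nonneg hT.le) (reactionCoeff_nonneg hT.le hfneg)
      (hψ (i + 1) hi)
      fun j hj => (h.eq_implicitStep hT.ne' hσ hI.ne' hJ.ne' i hi j hj).symm.trans_le
        (ih (by omega) j hj)

end bounds

section comparison

variable {T σ : ℝ} {I J : ℕ} {f : ℝ → ℝ → ℝ}

theorem BScheme.le_of_data_le {uT : ℝ → ℝ} {ψ ψ' φ φ' : ℕ → ℕ → ℝ} (hT : 0 < T) (hσ : σ ≠ 0)
    (hI : 0 < I) (hJ : 0 < J) (hfneg : ∀ x ∈ Set.Icc (0:ℝ) 1, ∀ ξ : ℝ, f x ξ ≤ 0)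
    (hfmono : ∀ x ∈ Set.Icc (0:ℝ) 1, Antitone (f x)) (hψ : MemM I J 0 ψ) (hφ : MemM I J 0 φ)
    (hle : ∀ i ≤ I, ∀ j ≤ J, ψ i j ≤ ψ' i j)
    (h : BScheme T σ I J f uT ψ φ) (h' : BScheme T σ I J f uT ψ' φ') :
    ∀ i ≤ I, ∀ j ≤ J, φ' i j ≤ φ i j := by
  intro i hi
  induction hi using Nat.decreasingInduction with
  | self => exact fun j hj => (h'.2 j hj).trans (h.2 j hj).symm |>.le
  | of_succ i hi ih =>
    refine implicitStep_comparison (r := diffusionRatio T σ I J) (d := reactionCoeff T σ I J f)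
      (diffusionRatio_nonneg hT.le) (reactionCoeff_nonneg hT.le hfneg)
      (reactionCoeff_monotone hT.le hfmono) (hφ i hi.le) (hψ i hi.le) (hle i hi.le) ?_
    intro j hj
    rw [← h.eq_implicitStep hT.ne' hσ hI.ne' hJ.ne' i hi j hj,
      ← h'.eq_implicitStep hT.ne' hσ hI.ne' hJ.ne' i hi j hj]
    exact ih j hj

theorem FScheme.le_of_data_le {m0 : ℝ → ℝ} {φ φ' ψ ψ' : ℕ → ℕ → ℝ} (hT : 0 < T) (hσ : σ ≠ 0)
    (hI : 0 < I) (hJ : 0 < J) (hfneg : ∀ x ∈ Set.Icc (0:ℝ) 1, ∀ ξ : ℝ, f x ξ ≤ 0)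
    (hfmono : ∀ x ∈ Set.Icc (0:ℝ) 1, Antitone (f x)) (hm0 : ∀ x ∈ Set.Icc (0:ℝ) 1, 0 ≤ m0 x)
    (hφ' : MemM I J 0 φ') (hφ'0 : ∀ j ≤ J, 0 < φ' 0 j) (hψ' : MemM I J 0 ψ')
    (hle : ∀ i ≤ I, ∀ j ≤ J, φ' i j ≤ φ i j)
    (h : FScheme T σ I J f m0 φ ψ) (h' : FScheme T σ I J f m0 φ' ψ') :
    ∀ i ≤ I, ∀ j ≤ J, ψ i j ≤ ψ' i j := by
  intro i hi
  induction i with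
  | zero =>
    intro j hj
    rw [h.2 j hj, h'.2 j hj]
    exact div_le_div_of_nonneg_left (hm0 _ (natCast_div_mem_Icc hj)) (hφ'0 j hj) (hle 0 hi j hj)
  | succ i ih =>
    refine implicitStep_comparison (r := diffusionRatio T σ I J) (d := reactionCoeff T σ I J f)
      (diffusionRatio_nonneg hT.le) (reactionCoeff_nonneg hT.le hfneg)
      (reactionCoeff_monotone hT.le hfmono) (hψ' (i + 1) hi) (hφ' (i + 1) hi) (hle (i + 1) hi) ?_
    intro j hj
    rw [← h.eq_implicitStep hT.ne' hσ hI.ne' hJ.ne' i hi j hj,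
      ← h'.eq_implicitStep hT.ne' hσ hI.ne' hJ.ne' i hi j hj]
    exact ih (by omega) j hj

end comparison

section limits

variable {T σ : ℝ} {I J : ℕ} {f : ℝ → ℝ → ℝ} {ι : Type*} {l : Filter ι} [l.NeBot]
  {Φs Ψs : ι → ℕ → ℕ → ℝ} {φ ψ : ℕ → ℕ → ℝ}

theorem MemM.of_tendsto {ε : ℝ} {ms : ι → ℕ → ℕ → ℝ} {m : ℕ → ℕ → ℝ}
    (hms : ∀ n, MemM I J ε (ms n))
    (h : ∀ i ≤ I, ∀ j ≤ J, Tendsto (fun n => ms n i j) l (nhds (m i j))) : MemM I J ε m :=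
  fun i hi j hj => ge_of_tendsto' (h i hi j hj) fun n => hms n i hi j hj

theorem BScheme.of_tendsto {uT : ℝ → ℝ} (hfc : ∀ x ∈ Set.Icc (0:ℝ) 1, Continuous (f x))
    (hB : ∀ n, BScheme T σ I J f uT (Ψs n) (Φs n))
    (hΦ : ∀ i ≤ I, ∀ j ≤ J, Tendsto (fun n => Φs n i j) l (nhds (φ i j)))
    (hΨ : ∀ i ≤ I, ∀ j ≤ J, Tendsto (fun n => Ψs n i j) l (nhds (ψ i j))) :
    BScheme T σ I J f uT ψ φ := by
  refine ⟨fun i hi j hj => ?_, fun j hj => ?_⟩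
  · have hφij := hΦ i hi.le j hj
    have hlhs := (((hΦ (i + 1) hi j hj).sub hφij).div_const (T / I)).add
      (((((hΦ i hi.le _ (min_le_right (j + 1) J)).sub (hφij.const_mul 2)).add
        (hΦ i hi.le _ ((j.sub_le 1).trans hj))).div_const ((1 / J) ^ 2)).const_mul (σ ^ 2 / 2))
    have hrhs := ((((hfc _ (natCast_div_mem_Icc hj)).tendsto _).comp
      (hφij.mul (hΨ i hi.le j hj))).const_mul (-(1 / σ ^ 2))).mul hφij
    exact tendsto_nhds_unique hlhs (hrhs.congr fun n => ((hB n).1 i hi j hj).symm)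
  · exact tendsto_nhds_unique (hΦ I le_rfl j hj)
      (tendsto_const_nhds.congr fun n => ((hB n).2 j hj).symm)

theorem FScheme.of_tendsto {m0 : ℝ → ℝ} (hfc : ∀ x ∈ Set.Icc (0:ℝ) 1, Continuous (f x))
    (hF : ∀ n, FScheme T σ I J f m0 (Φs n) (Ψs n))
    (hΦ : ∀ i ≤ I, ∀ j ≤ J, Tendsto (fun n => Φs n i j) l (nhds (φ i j)))
    (hΨ : ∀ i ≤ I, ∀ j ≤ J, Tendsto (fun n => Ψs n i j) l (nhds (ψ i j)))
    (hφ0 : ∀ j ≤ J, φ 0 j ≠ 0) :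
    FScheme T σ I J f m0 φ ψ := by
  refine ⟨fun i hi j hj => ?_, fun j hj => ?_⟩
  · have hψij := hΨ (i + 1) hi j hj
    have hlhs := ((hψij.sub (hΨ i hi.le j hj)).div_const (T / I)).sub
      (((((hΨ (i + 1) hi _ (min_le_right (j + 1) J)).sub (hψij.const_mul 2)).add
        (hΨ (i + 1) hi _ ((j.sub_le 1).trans hj))).div_const ((1 / J) ^ 2)).const_mul (σ ^ 2 / 2))
    have hrhs := ((((hfc _ (natCast_div_mem_Icc hj)).tendsto _).comp
      ((hΦ (i + 1) hi j hj).mul hψij)).const_mul (1 / σ ^ 2)).mul hψij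
    exact tendsto_nhds_unique hlhs (hrhs.congr fun n => ((hF n).1 i hi j hj).symm)
  · exact tendsto_nhds_unique (hΨ 0 I.zero_le j hj)
      ((tendsto_const_nhds.div (hΦ 0 I.zero_le j hj) (hφ0 j hj)).congr
        fun n => ((hF n).2 j hj).symm)

end limits

section iterates

variable {T σ : ℝ} {I J : ℕ} {f : ℝ → ℝ → ℝ} {m0 : ℝ → ℝ}

theorem FScheme.le_sum_div {φ ψ : ℕ → ℕ → ℝ} (hT : 0 < T) (hσ : σ ≠ 0) (hI : 0 < I) (hJ : 0 < J)
    (hfneg : ∀ x ∈ Set.Icc (0:ℝ) 1, ∀ ξ : ℝ, f x ξ ≤ 0) (hm0 : ∀ x ∈ Set.Icc (0:ℝ) 1, 0 ≤ m0 x)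
    {ε : ℝ} (hε : 0 < ε) (hφ : MemM I J ε φ) (hψ : MemM I J 0 ψ) (h : FScheme T σ I J f m0 φ ψ) :
    ∀ i ≤ I, ∀ j ≤ J, ψ i j ≤ (∑ k ∈ Finset.range (J + 1), m0 (k / J)) / ε := by
  refine h.le_of_initial_le hT hσ hI hJ hfneg hψ fun j hj => ?_
  rw [h.2 j hj]
  have hm0j := hm0 _ (natCast_div_mem_Icc hj)
  calc m0 (j / J) / φ 0 j ≤ m0 (j / J) / ε :=
        div_le_div_of_nonneg_left hm0j hε (hφ 0 I.zero_le j hj)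
    _ ≤ (∑ k ∈ Finset.range (J + 1), m0 (k / J)) / ε := by
      gcongr
      exact Finset.single_le_sum (f := fun k : ℕ => m0 (k / J))
        (fun k hk => hm0 _ (natCast_div_mem_Icc (Finset.mem_range_succ_iff.1 hk)))
        (Finset.mem_range_succ_iff.2 hj)

theorem iterates_monotone {uT : ℝ → ℝ} {Φs Ψs : ℕ → ℕ → ℕ → ℝ} (hT : 0 < T) (hσ : σ ≠ 0)
    (hI : 0 < I) (hJ : 0 < J) (hfneg : ∀ x ∈ Set.Icc (0:ℝ) 1, ∀ ξ : ℝ, f x ξ ≤ 0)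
    (hfmono : ∀ x ∈ Set.Icc (0:ℝ) 1, Antitone (f x)) (hm0 : ∀ x ∈ Set.Icc (0:ℝ) 1, 0 ≤ m0 x)
    (hΦ : ∀ n, ∀ i ≤ I, ∀ j ≤ J, 0 < Φs n i j) (hΨ : ∀ n, MemM I J 0 (Ψs n))
    (hΨ0 : ∀ i ≤ I, ∀ j ≤ J, Ψs 0 i j = 0) (hB : ∀ n, BScheme T σ I J f uT (Ψs n) (Φs n))
    (hF : ∀ n, FScheme T σ I J f m0 (Φs n) (Ψs (n + 1))) :
    ∀ i ≤ I, ∀ j ≤ J, Monotone (fun n => Ψs n i j) ∧ Antitone (fun n => Φs n i j) := by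
  have hΦ' n : MemM I J 0 (Φs n) := fun i hi j hj => (hΦ n i hi j hj).le
  have hΦanti {a b : ℕ} (hab : ∀ i ≤ I, ∀ j ≤ J, Ψs a i j ≤ Ψs b i j) :=
    (hB a).le_of_data_le hT hσ hI hJ hfneg hfmono (hΨ a) (hΦ' a) hab (hB b)
  have hΨmono n : ∀ i ≤ I, ∀ j ≤ J, Ψs n i j ≤ Ψs (n + 1) i j := by
    induction n with
    | zero => exact fun i hi j hj => (hΨ0 i hi j hj).trans_le (hΨ 1 i hi j hj)
    | succ n ih =>
      exact (hF n).le_of_data_le hT hσ hI hJ hfneg hfmono hm0 (hΦ' (n + 1))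
        (fun j hj => hΦ (n + 1) 0 I.zero_le j hj) (hΨ (n + 2)) (hΦanti ih) (hF (n + 1))
  exact fun i hi j hj => ⟨monotone_nat_of_le_succ fun n => hΨmono n i hi j hj,
    antitone_nat_of_succ_le fun n => hΦanti (hΨmono n) i hi j hj⟩

end iterates

theorem stmt_8_general (T σ : ℝ) (hT : 0 < T) (hσ : 0 < σ)
    (I J : ℕ) (hI : 1 ≤ I) (hJ : 1 ≤ J)
    (f : ℝ → ℝ → ℝ) (uT m0 : ℝ → ℝ)
    (hfc : ∀ x ∈ Set.Icc (0:ℝ) 1, Continuous (f x))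
    (hfb : ∃ B : ℝ, ∀ x ∈ Set.Icc (0:ℝ) 1, ∀ ξ : ℝ, |f x ξ| ≤ B)
    (hfneg : ∀ x ∈ Set.Icc (0:ℝ) 1, ∀ ξ : ℝ, f x ξ ≤ 0)
    (hfmono : ∀ x ∈ Set.Icc (0:ℝ) 1, Antitone (f x))
    (huTb : ∃ B : ℝ, ∀ x ∈ Set.Icc (0:ℝ) 1, |uT x| ≤ B)
    (hm0 : ∀ x ∈ Set.Icc (0:ℝ) 1, 0 ≤ m0 x)
    (Φs Ψs : ℕ → ℕ → ℕ → ℝ)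
    (hΨ0 : ∀ i ≤ I, ∀ j ≤ J, Ψs 0 i j = 0)
    (hB : ∀ n : ℕ, BScheme T σ I J f uT (Ψs n) (Φs n))
    (hF : ∀ n : ℕ, FScheme T σ I J f m0 (Φs n) (Ψs (n+1)))
 :
    ∃ φ ψ : ℕ → ℕ → ℝ,
      MemM I J (Real.exp (-(supIcc uT + supF f * T) / σ^2)) φ ∧ MemM I J 0 ψ ∧
      (∀ i ≤ I, ∀ j ≤ J,
        Tendsto (fun n => Φs n i j) atTop (nhds (φ i j)) ∧
        Tendsto (fun n => Ψs n i j) atTop (nhds (ψ i j))) ∧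
      BScheme T σ I J f uT ψ φ ∧ FScheme T σ I J f m0 φ ψ := by
  set ε := exp (-(supIcc uT + supF f * T) / σ ^ 2)
  have hΦε n : MemM I J ε (Φs n) := (hB n).memM_exp hT hσ.ne' hI hJ hfneg
    (fun _ hx => abs_le_supF hfb hx) (fun _ hx => abs_le_supIcc huTb hx)
  have hΦpos n : ∀ i ≤ I, ∀ j ≤ J, 0 < Φs n i j :=
    fun i hi j hj => (exp_pos _).trans_le (hΦε n i hi j hj)
  have hΨ : ∀ n, MemM I J 0 (Ψs n)
    | 0 => fun i hi j hj => (hΨ0 i hi j hj).ge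
    | n + 1 => (hF n).memM_zero hT hσ.ne' hI hJ hfneg hm0 fun j hj => (hΦpos n 0 I.zero_le j hj).le
  set M := (∑ k ∈ Finset.range (J + 1), m0 (k / J)) / ε
  have hΨM : ∀ n, ∀ i ≤ I, ∀ j ≤ J, Ψs n i j ≤ M
    | 0 => fun i hi j hj => (hΨ0 i hi j hj).trans_le <| div_nonneg
        (Finset.sum_nonneg fun k hk => hm0 _ (natCast_div_mem_Icc (Finset.mem_range_succ_iff.1 hk)))
        (exp_pos _).le
    | n + 1 => (hF n).le_sum_div hT hσ.ne' hI hJ hfneg hm0 (exp_pos _) (hΦε n) (hΨ (n + 1))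
  have hmono := iterates_monotone hT hσ.ne' hI hJ hfneg hfmono hm0 hΦpos hΨ hΨ0 hB hF
  have hΦlim i hi j hj := tendsto_atTop_ciInf (hmono i hi j hj).2
    ⟨ε, Set.forall_mem_range.2 fun n => hΦε n i hi j hj⟩
  have hΨlim i hi j hj := tendsto_atTop_ciSup (hmono i hi j hj).1
    ⟨M, Set.forall_mem_range.2 fun n => hΨM n i hi j hj⟩
  have hφε := MemM.of_tendsto hΦε hΦlim
  refine ⟨_, _, hφε, MemM.of_tendsto hΨ hΨlim, fun i hi j hj => ⟨hΦlim i hi j hj, hΨlim i hi j hj⟩,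
    BScheme.of_tendsto hfc hB hΦlim hΨlim,
    FScheme.of_tendsto hfc hF hΦlim
      (fun i hi j hj => (hΨlim i hi j hj).comp (tendsto_add_atTop_nat 1))
      fun j hj => ((exp_pos _).trans_le (hφε 0 I.zero_le j hj)).ne'⟩

theorem stmt_8 (T σ : ℝ) (hT : 0 < T) (hσ : 0 < σ)
    (I J : ℕ) (hI : 1 ≤ I) (hJ : 1 ≤ J)
    (f : ℝ → ℝ → ℝ) (uT m0 : ℝ → ℝ)
    (hfc : ∀ x ∈ Set.Icc (0:ℝ) 1, Continuous (f x))
    (hfb : ∃ B : ℝ, ∀ x ∈ Set.Icc (0:ℝ) 1, ∀ ξ : ℝ, |f x ξ| ≤ B)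
    (hfneg : ∀ x ∈ Set.Icc (0:ℝ) 1, ∀ ξ : ℝ, f x ξ ≤ 0)
    (hfmono : ∀ x ∈ Set.Icc (0:ℝ) 1, Antitone (f x))
    (huTb : ∃ B : ℝ, ∀ x ∈ Set.Icc (0:ℝ) 1, |uT x| ≤ B)
    (hm0b : ∃ B : ℝ, ∀ x ∈ Set.Icc (0:ℝ) 1, |m0 x| ≤ B)
    (hm0 : ∀ x ∈ Set.Icc (0:ℝ) 1, 0 ≤ m0 x)
    (Φs Ψs : ℕ → ℕ → ℕ → ℝ)
    (hΨ0 : ∀ i ≤ I, ∀ j ≤ J, Ψs 0 i j = 0)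
    (hB : ∀ n : ℕ, BScheme T σ I J f uT (Ψs n) (Φs n))
    (hF : ∀ n : ℕ, FScheme T σ I J f m0 (Φs n) (Ψs (n+1)))
 :
    ∃ φ ψ : ℕ → ℕ → ℝ,
      MemM I J (Real.exp (-(supIcc uT + supF f * T) / σ^2)) φ ∧ MemM I J 0 ψ ∧
      (∀ i ≤ I, ∀ j ≤ J,
        Tendsto (fun n => Φs n i j) atTop (nhds (φ i j)) ∧
        Tendsto (fun n => Ψs n i j) atTop (nhds (ψ i j))) ∧
      BScheme T σ I J f uT ψ φ ∧ FScheme T σ I J f m0 φ ψ :=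
  stmt_8_general T σ hT hσ I J hI hJ f uT m0 hfc hfb hfneg hfmono huTb hm0 Φs Ψs hΨ0 hB hF
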